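/- arXiv:2101.00242 — 5 statements merged into one kernel-verified Lean document; each statement's English description precedes it below -/
import Mathlib

section
/- Lemma 3.2 (uniform two-sided bounds). Let (Ū, V̄) be a C¹ solution of system (3.8) on the region Ω which extends continuously to the boundary curve Γ = {(t, r̃(t)) : 0 < t ≤ t₀} with boundary values satisfying m̄₀ ≤ Ū(t, r̃(t)), V̄(t, r̃(t)) ≤ M̄₀ for all t ∈ (0,t₀], where 0 < m̄₀ ≤ M̄₀. Set k₀ = (κ+2)/(κ(1−t₀²)). Then for all (t,r) ∈ Ω one has (1/2)·m̄₀ ≤ Ū(t,r) ≤ 2e^{k₀}·M̄₀ and (1/2)·m̄₀ ≤ V̄(t,r) ≤ 2e^{k₀}·M̄₀. -/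
/-- Partial derivative in the first (t) variable. -/
noncomputable def pdt (f : ℝ × ℝ → ℝ) (p : ℝ × ℝ) : ℝ := fderiv ℝ f p (1, 0)

/-- Partial derivative in the second (r) variable. -/
noncomputable def pdr (f : ℝ × ℝ → ℝ) (p : ℝ × ℝ) : ℝ := fderiv ℝ f p (0, 1)

/-- The characteristic speed λ(t) = √(1−t²)·t²/F(t), F(t) = (1−t²)(κ+1−t²). -/
noncomputable def lam (κ t : ℝ) : ℝ :=
  Real.sqrt (1 - t^2) * t^2 / ((1 - t^2) * (κ + 1 - t^2))

/-- ř(t) = r₀ − ∫ₜ^{t₀} λ(s) ds, the positive characteristic through (t₀,r₀). -/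
noncomputable def rcheck (κ t₀ r₀ t : ℝ) : ℝ := r₀ - ∫ s in t..t₀, lam κ s

/-- The region Ω = {(t,r) : 0 < t ≤ t₀, r̃(t) ≤ r ≤ ř(t)}. -/
def region (κ t₀ r₀ : ℝ) (rt : ℝ → ℝ) : Set (ℝ × ℝ) :=
  {p : ℝ × ℝ | 0 < p.1 ∧ p.1 ≤ t₀ ∧ rt p.1 ≤ p.2 ∧ p.2 ≤ rcheck κ t₀ r₀ p.1}

/-- The linear system (3.8) holding at every point of a set `D`. -/
def Sys38 (κ : ℝ) (Ub Vb : ℝ × ℝ → ℝ) (D : Set (ℝ × ℝ)) : Prop :=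
  ∀ p ∈ D,
    pdt Ub p + lam κ p.1 * pdr Ub p =
      (Ub p - Vb p) / (2 * p.1)
      + ((κ + 2 - p.1^2) * p.1 / (2 * ((1 - p.1^2) * (κ + 1 - p.1^2)))) * (Ub p - Vb p)
      - ((κ + 2 - 2*p.1^2) * p.1 / ((1 - p.1^2) * (κ + 1 - p.1^2))) * Ub p ∧
    pdt Vb p - lam κ p.1 * pdr Vb p =
      (Vb p - Ub p) / (2 * p.1)
      - ((κ + 2 - p.1^2) * p.1 / (2 * ((1 - p.1^2) * (κ + 1 - p.1^2)))) * (Ub p - Vb p)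
      - ((κ + 2 - 2*p.1^2) * p.1 / ((1 - p.1^2) * (κ + 1 - p.1^2))) * Vb p

/-!
Comparison with barriers along characteristics. In the form
`∂ₜŪ + λ∂ᵣŪ = a (Ū - V̄) - c Ū`, `∂ₜV̄ - λ∂ᵣV̄ = a (V̄ - Ū) - c V̄` of (3.8) one has `a ≥ 0` and
`0 < c < k₀`. On `Ω` cut off at height `δ` below `ř`, suppose `Ū` or `V̄` leaves the open band
between the barriers `m₀/2` and `ψ(t) = 2 M₀ e^{k₀(1-t)}`; by compactness there is such a point
`A` with largest `t`. The data put `A` off `Γ`, so `A` is interior and one component touches a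
barrier at `A` while both stay in the band for larger `t`. Along that component's characteristic
its derivative at `A` is then `≥ 0` (lower barrier) or `≤ ψ' = -k₀ ψ` (upper barrier), whereas the
equation gives `≤ -c m₀/2 < 0` or `≥ -c ψ > -k₀ ψ`. Letting `δ → 0` covers `Ω`, and
`ψ ≤ 2 e^{k₀} M₀` for `t ≥ 0`.
-/

open Set Filter Topology

section Region

variable {κ t₀ r₀ δ : ℝ} {rt : ℝ → ℝ}

theorem continuousOn_lam (hκ : 0 < κ) : ContinuousOn (lam κ) (Ioo (-1) 1) := by
  intro t ht
  have ht2 : t ^ 2 < 1 := by nlinarith [ht.1, ht.2]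
  apply ContinuousAt.continuousWithinAt
  unfold lam
  exact ContinuousAt.div (by fun_prop) (by fun_prop) (by nlinarith)

theorem lam_nonneg (hκ : 0 < κ) {t : ℝ} (ht : t ∈ Ioo (-1) 1) : 0 ≤ lam κ t := by
  have ht2 : t ^ 2 < 1 := by nlinarith [ht.1, ht.2]
  unfold lam
  exact div_nonneg (by positivity) (by nlinarith)

theorem hasDerivAt_rcheck (hκ : 0 < κ) (ht₀ : t₀ ∈ Ioo (-1) 1) {t : ℝ} (ht : t ∈ Ioo (-1) 1) :
    HasDerivAt (rcheck κ t₀ r₀) (lam κ t) t := by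
  have hcont := continuousOn_lam hκ
  have hint : IntervalIntegrable (lam κ) MeasureTheory.volume t t₀ :=
    (hcont.mono (ordConnected_Ioo.uIcc_subset ht ht₀)).intervalIntegrable
  exact ((intervalIntegral.integral_hasDerivAt_left hint
    (hcont.stronglyMeasurableAtFilter isOpen_Ioo t ht)
    (hcont.continuousAt (Ioo_mem_nhds ht.1 ht.2))).const_sub r₀).congr_deriv (neg_neg _)

theorem continuousOn_rcheck (hκ : 0 < κ) (ht₀ : t₀ ∈ Ioo (-1) 1) :
    ContinuousOn (rcheck κ t₀ r₀) (Ioo (-1) 1) :=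
  fun _ ht => (hasDerivAt_rcheck hκ ht₀ ht).continuousAt.continuousWithinAt

theorem monotoneOn_rcheck (hκ : 0 < κ) (ht₀ : t₀ ∈ Ioo (-1) 1) :
    MonotoneOn (rcheck κ t₀ r₀) (Ioo (-1) 1) := by
  refine monotoneOn_of_deriv_nonneg (convex_Ioo _ _) (continuousOn_rcheck hκ ht₀)
    (fun t ht => (hasDerivAt_rcheck hκ ht₀ (interior_subset ht)).differentiableAt
      |>.differentiableWithinAt) ?_
  rw [interior_Ioo]
  exact fun t ht => (hasDerivAt_rcheck hκ ht₀ ht).deriv ▸ lam_nonneg hκ ht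

@[simp]
theorem rcheck_self : rcheck κ t₀ r₀ t₀ = r₀ := by
  simp [rcheck]

theorem region_mem_nhds (hκ : 0 < κ) (ht₀ : t₀ ∈ Ioo 0 1) (hrt : ContinuousOn rt (Icc 0 t₀))
    {p : ℝ × ℝ} (hp₁ : p.1 ∈ Ioo 0 t₀) (hrtp : rt p.1 < p.2) (hpr : p.2 < rcheck κ t₀ r₀ p.1) :
    region κ t₀ r₀ rt ∈ 𝓝 p := by
  have hrtAt : ContinuousAt (fun q : ℝ × ℝ => rt q.1) p :=
    (hrt.continuousAt (Icc_mem_nhds hp₁.1 hp₁.2)).comp continuous_fst.continuousAt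
  have hrcAt : ContinuousAt (fun q : ℝ × ℝ => rcheck κ t₀ r₀ q.1) p :=
    (hasDerivAt_rcheck hκ (Ioo_subset_Ioo_left (by norm_num) ht₀)
      ⟨by linarith [hp₁.1], hp₁.2.trans ht₀.2⟩).continuousAt.comp continuous_fst.continuousAt
  filter_upwards [continuous_fst.continuousAt.preimage_mem_nhds (Ioo_mem_nhds hp₁.1 hp₁.2),
    hrtAt.eventually_lt continuous_snd.continuousAt hrtp,
    continuous_snd.continuousAt.eventually_lt hrcAt hpr] with q hq h₁ h₂
  exact ⟨hq.1, hq.2.le, h₁.le, h₂.le⟩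

-- `Ω` is not a neighbourhood of its points on `ř`, so there `pdt`, `pdr` (built from `fderiv`)
-- need not be derivatives of anything; below `ř - δ` every point off `Γ` is interior to `Ω`.
def truncRegion (κ t₀ r₀ : ℝ) (rt : ℝ → ℝ) (δ : ℝ) : Set (ℝ × ℝ) :=
  {p | p ∈ region κ t₀ r₀ rt ∧ p.2 ≤ rcheck κ t₀ r₀ p.1 - δ}

theorem fst_lt_of_mem_truncRegion (hrtt₀ : rt t₀ = r₀) (hδ : 0 < δ) {p : ℝ × ℝ}
    (hp : p ∈ truncRegion κ t₀ r₀ rt δ) (hrtp : rt p.1 < p.2) : p.1 < t₀ := by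
  refine hp.1.2.1.lt_of_ne fun h => ?_
  have hpr := hp.2
  rw [h, rcheck_self] at hpr
  rw [h, hrtt₀] at hrtp
  linarith

theorem isCompact_truncRegion_inter (hκ : 0 < κ) (ht₀ : t₀ ∈ Ioo 0 1)
    (hrt : ContinuousOn rt (Icc 0 t₀)) (hδ : 0 ≤ δ) {c : ℝ} (hc : 0 < c) :
    IsCompact {p ∈ truncRegion κ t₀ r₀ rt δ | c ≤ p.1} := by
  have hrt' : ContinuousOn rt (Icc c t₀) := hrt.mono (Icc_subset_Icc_left hc.le)
  have hrc : ContinuousOn (rcheck κ t₀ r₀) (Icc c t₀) :=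
    (continuousOn_rcheck hκ (Ioo_subset_Ioo_left (by norm_num) ht₀)).mono
      fun t ht => ⟨by linarith [ht.1], ht.2.trans_lt ht₀.2⟩
  obtain ⟨a, ha⟩ := isCompact_Icc.bddBelow_image hrt'
  obtain ⟨b, hb⟩ := isCompact_Icc.bddAbove_image hrc
  have hbox : IsCompact (Icc c t₀ ×ˢ Icc a b) := isCompact_Icc.prod isCompact_Icc
  have hg : ContinuousOn (fun q : ℝ × ℝ => min (q.2 - rt q.1) (rcheck κ t₀ r₀ q.1 - δ - q.2))
      (Icc c t₀ ×ˢ Icc a b) := by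
    have hfst : MapsTo Prod.fst (Icc c t₀ ×ˢ Icc a b) (Icc c t₀) := fun q hq => hq.1
    exact ContinuousOn.inf
      (continuous_snd.continuousOn.sub (hrt'.comp continuous_fst.continuousOn hfst))
      (((hrc.comp continuous_fst.continuousOn hfst).sub continuousOn_const).sub
        continuous_snd.continuousOn)
  have hK : {p ∈ truncRegion κ t₀ r₀ rt δ | c ≤ p.1} =
      (Icc c t₀ ×ˢ Icc a b) ∩ (fun q : ℝ × ℝ => min (q.2 - rt q.1)
        (rcheck κ t₀ r₀ q.1 - δ - q.2)) ⁻¹' Ici 0 := by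
    ext q
    simp only [truncRegion, region, mem_ofPred_eq, mem_inter_iff, mem_prod, mem_Icc,
      mem_preimage, mem_Ici, le_min_iff, sub_nonneg]
    constructor
    · rintro ⟨⟨⟨-, hq₁, hq₂, -⟩, hq₃⟩, hcq⟩
      exact ⟨⟨⟨hcq, hq₁⟩, (ha ⟨q.1, ⟨hcq, hq₁⟩, rfl⟩).trans hq₂,
        by linarith [hb ⟨q.1, ⟨hcq, hq₁⟩, rfl⟩]⟩, hq₂, by linarith⟩
    · rintro ⟨⟨⟨hcq, hq₁⟩, -⟩, hq₂, hq₃⟩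
      exact ⟨⟨⟨hc.trans_le hcq, hq₁, hq₂, by linarith⟩, by linarith⟩, hcq⟩
  rw [hK]
  exact hbox.of_isClosed_subset (hg.preimage_isClosed_of_isClosed hbox.isClosed isClosed_Ici)
    inter_subset_left

noncomputable def charCurve (κ t₀ r₀ : ℝ) (p : ℝ × ℝ) (s t : ℝ) : ℝ :=
  p.2 + s * (rcheck κ t₀ r₀ t - rcheck κ t₀ r₀ p.1)

@[simp]
theorem charCurve_self (p : ℝ × ℝ) (s : ℝ) : charCurve κ t₀ r₀ p s p.1 = p.2 := by
  simp [charCurve]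

theorem hasDerivAt_charCurve (hκ : 0 < κ) (ht₀ : t₀ ∈ Ioo (-1) 1) {p : ℝ × ℝ}
    (hp : p.1 ∈ Ioo (-1) 1) (s : ℝ) :
    HasDerivAt (charCurve κ t₀ r₀ p s) (s * lam κ p.1) p.1 :=
  (((hasDerivAt_rcheck hκ ht₀ hp).sub_const _).const_mul s).const_add p.2

theorem eventually_mem_truncRegion_charCurve (hκ : 0 < κ) (ht₀ : t₀ ∈ Ioo 0 1)
    (hrt : ContinuousOn rt (Icc 0 t₀)) (hrtt₀ : rt t₀ = r₀) (hδ : 0 < δ) {s : ℝ} (hs : s ≤ 1)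
    {p : ℝ × ℝ} (hp : p ∈ truncRegion κ t₀ r₀ rt δ) (hrtp : rt p.1 < p.2) :
    ∀ᶠ t in 𝓝[>] p.1, (t, charCurve κ t₀ r₀ p s t) ∈ truncRegion κ t₀ r₀ rt δ := by
  have hp₀ : 0 < p.1 := hp.1.1
  have hpt₀ : p.1 < t₀ := fst_lt_of_mem_truncRegion hrtt₀ hδ hp hrtp
  have ht₀' : t₀ ∈ Ioo (-1) 1 := (Ioo_subset_Ioo_left (by norm_num) ht₀)
  have hγ : ContinuousAt (charCurve κ t₀ r₀ p s) p.1 :=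
    (hasDerivAt_charCurve hκ ht₀' ⟨by linarith, hpt₀.trans ht₀.2⟩ s).continuousAt
  have hbelow : ∀ᶠ t in 𝓝 p.1, rt t < charCurve κ t₀ r₀ p s t :=
    (hrt.continuousAt (Icc_mem_nhds hp₀ hpt₀)).eventually_lt hγ (by simpa using hrtp)
  filter_upwards [nhdsWithin_le_nhds hbelow, nhdsWithin_le_nhds (eventually_lt_nhds hpt₀),
    self_mem_nhdsWithin] with t hrtt htt₀ hpt
  have hmono : rcheck κ t₀ r₀ p.1 ≤ rcheck κ t₀ r₀ t :=
    monotoneOn_rcheck hκ ht₀' ⟨by linarith, hpt₀.trans ht₀.2⟩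
      ⟨by linarith [hpt.out], htt₀.trans ht₀.2⟩ hpt.out.le
  have hγδ : charCurve κ t₀ r₀ p s t ≤ rcheck κ t₀ r₀ t - δ := by
    unfold charCurve
    nlinarith [hp.2]
  exact ⟨⟨hp₀.trans hpt, htt₀.le, hrtt.le, by linarith⟩, hγδ⟩

end Region

theorem hasDerivAt_comp_graph {f : ℝ × ℝ → ℝ} {p : ℝ × ℝ} (hf : DifferentiableAt ℝ f p)
    {γ : ℝ → ℝ} {γ' : ℝ} (hγ : HasDerivAt γ γ' p.1) (hγp : γ p.1 = p.2) :
    HasDerivAt (fun t => f (t, γ t)) (pdt f p + γ' * pdr f p) p.1 := by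
  have hp : (p.1, γ p.1) = p := by rw [hγp]
  have hf' : HasFDerivAt f (fderiv ℝ f p) (p.1, γ p.1) := hp ▸ hf.hasFDerivAt
  have hval : fderiv ℝ f p (1, γ') = pdt f p + γ' * pdr f p := by
    rw [pdt, pdr, ← smul_eq_mul γ', ← map_smul, ← map_add]
    simp
  exact hval ▸ hf'.comp_hasDerivAt p.1 ((hasDerivAt_id _).prodMk hγ)

theorem HasDerivAt.nonpos_of_eventually_le {w : ℝ → ℝ} {D τ : ℝ} (hw : HasDerivAt w D τ)
    (h : ∀ᶠ t in 𝓝[>] τ, w t ≤ w τ) : D ≤ 0 := by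
  have hcone : (1 : ℝ) ∈ posTangentConeAt (Ioi τ) τ :=
    one_mem_posTangentConeAt_iff_frequently.2 (Eventually.frequently self_mem_nhdsWithin)
  simpa using IsLocalMaxOn.hasFDerivWithinAt_nonpos h hw.hasFDerivAt.hasFDerivWithinAt hcone

theorem HasDerivAt.nonneg_of_eventually_ge {w : ℝ → ℝ} {D τ : ℝ} (hw : HasDerivAt w D τ)
    (h : ∀ᶠ t in 𝓝[>] τ, w τ ≤ w t) : 0 ≤ D :=
  neg_nonpos.1 (hw.neg.nonpos_of_eventually_le (h.mono fun _ ht => neg_le_neg ht))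

noncomputable def coupling (κ t : ℝ) : ℝ :=
  1 / (2 * t) + (κ + 2 - t ^ 2) * t / (2 * ((1 - t ^ 2) * (κ + 1 - t ^ 2)))

noncomputable def damping (κ t : ℝ) : ℝ :=
  (κ + 2 - 2 * t ^ 2) * t / ((1 - t ^ 2) * (κ + 1 - t ^ 2))

theorem Sys38.transport {κ : ℝ} {U V : ℝ × ℝ → ℝ} {D : Set (ℝ × ℝ)} (hsys : Sys38 κ U V D)
    {p : ℝ × ℝ} (hp : p ∈ D) :
    pdt U p + 1 * lam κ p.1 * pdr U p =
        coupling κ p.1 * (U p - V p) - damping κ p.1 * U p ∧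
      pdt V p + -1 * lam κ p.1 * pdr V p =
        coupling κ p.1 * (V p - U p) - damping κ p.1 * V p := by
  obtain ⟨hU, hV⟩ := hsys p hp
  unfold coupling damping
  exact ⟨by linear_combination hU, by linear_combination hV⟩

section Coefficients

variable {κ t : ℝ}

theorem coupling_nonneg (hκ : 0 < κ) (ht : t ∈ Ioo 0 1) : 0 ≤ coupling κ t := by
  obtain ⟨ht₀, ht₁⟩ := ht
  have h₁ : 0 < 1 - t ^ 2 := by nlinarith
  have h₂ : 0 < κ + 1 - t ^ 2 := by linarith
  unfold coupling
  exact add_nonneg (div_nonneg zero_le_one (by linarith))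
    (div_nonneg (by nlinarith) (by positivity))

theorem damping_pos (hκ : 0 < κ) (ht : t ∈ Ioo 0 1) : 0 < damping κ t := by
  obtain ⟨ht₀, ht₁⟩ := ht
  have h₁ : 0 < 1 - t ^ 2 := by nlinarith
  unfold damping
  exact div_pos (mul_pos (by linarith) ht₀) (mul_pos h₁ (by linarith))

theorem damping_lt {t₀ : ℝ} (hκ : 0 < κ) (ht : 0 < t) (htt₀ : t ≤ t₀) (ht₀ : t₀ < 1) :
    damping κ t < (κ + 2) / (κ * (1 - t₀ ^ 2)) := by
  have h₁ : 1 - t₀ ^ 2 ≤ 1 - t ^ 2 := by nlinarith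
  have h₂ : 0 < 1 - t₀ ^ 2 := by nlinarith
  have hF : κ * (1 - t₀ ^ 2) ≤ (1 - t ^ 2) * (κ + 1 - t ^ 2) := by nlinarith
  have hN : (κ + 2 - 2 * t ^ 2) * t < κ + 2 := by nlinarith
  unfold damping
  rw [div_lt_div_iff₀ (by nlinarith) (by positivity)]
  calc (κ + 2 - 2 * t ^ 2) * t * (κ * (1 - t₀ ^ 2))
      ≤ (κ + 2 - 2 * t ^ 2) * t * ((1 - t ^ 2) * (κ + 1 - t ^ 2)) :=
        mul_le_mul_of_nonneg_left hF (by nlinarith)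
    _ < (κ + 2) * ((1 - t ^ 2) * (κ + 1 - t ^ 2)) :=
        mul_lt_mul_of_pos_right hN (by nlinarith)

theorem nonneg_of_forall_damping_lt {t₀ k : ℝ} (hκ : 0 < κ) (ht₀ : t₀ ∈ Ioo 0 1)
    (hdamp : ∀ t ∈ Ioc 0 t₀, damping κ t < k) : 0 ≤ k :=
  (damping_pos hκ ht₀).le.trans (hdamp t₀ ⟨ht₀.1, le_rfl⟩).le

end Coefficients

section Barrier

variable {k m M t : ℝ}

noncomputable def upperBarrier (k M t : ℝ) : ℝ := 2 * M * Real.exp (k * (1 - t))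

theorem hasDerivAt_upperBarrier (k M t : ℝ) :
    HasDerivAt (upperBarrier k M) (-k * upperBarrier k M t) t := by
  have h := (((hasDerivAt_id t).const_sub 1).const_mul k).exp.const_mul (2 * M)
  exact h.congr_deriv (by simp only [upperBarrier, id]; ring)

theorem continuous_upperBarrier (k M : ℝ) : Continuous (upperBarrier k M) := by
  unfold upperBarrier
  fun_prop

theorem upperBarrier_pos (hM : 0 < M) : 0 < upperBarrier k M t := by
  unfold upperBarrier
  positivity

theorem two_mul_le_upperBarrier (hk : 0 ≤ k) (hM : 0 ≤ M) (ht : t ≤ 1) :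
    2 * M ≤ upperBarrier k M t := by
  unfold upperBarrier
  nlinarith [Real.one_le_exp (mul_nonneg hk (sub_nonneg.2 ht))]

theorem upperBarrier_le (hk : 0 ≤ k) (hM : 0 ≤ M) (ht : 0 ≤ t) :
    upperBarrier k M t ≤ 2 * Real.exp k * M := by
  have h : Real.exp (k * (1 - t)) ≤ Real.exp k := Real.exp_le_exp.2 (by nlinarith)
  unfold upperBarrier
  nlinarith

noncomputable def margin (k m M : ℝ) (U V : ℝ × ℝ → ℝ) (q : ℝ × ℝ) : ℝ :=
  min (min (U q - m / 2) (upperBarrier k M q.1 - U q))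
    (min (V q - m / 2) (upperBarrier k M q.1 - V q))

variable {U V : ℝ × ℝ → ℝ} {q : ℝ × ℝ}

theorem margin_pos_iff : 0 < margin k m M U V q ↔
    U q ∈ Ioo (m / 2) (upperBarrier k M q.1) ∧ V q ∈ Ioo (m / 2) (upperBarrier k M q.1) := by
  simp only [margin, lt_min_iff, sub_pos, mem_Ioo]

theorem margin_nonneg_iff : 0 ≤ margin k m M U V q ↔
    U q ∈ Icc (m / 2) (upperBarrier k M q.1) ∧ V q ∈ Icc (m / 2) (upperBarrier k M q.1) := by
  simp only [margin, le_min_iff, sub_nonneg, mem_Icc]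

theorem ContinuousOn.margin {s : Set (ℝ × ℝ)} (hU : ContinuousOn U s) (hV : ContinuousOn V s) :
    ContinuousOn (margin k m M U V) s := by
  have hψ : ContinuousOn (fun q : ℝ × ℝ => upperBarrier k M q.1) s :=
    ((continuous_upperBarrier k M).comp continuous_fst).continuousOn
  exact ((hU.sub continuousOn_const).inf (hψ.sub hU)).inf
    ((hV.sub continuousOn_const).inf (hψ.sub hV))

end Barrier

theorem not_eventually_ge_of_damped {w : ℝ → ℝ} {τ x y a c : ℝ}
    (hw : HasDerivAt w (a * (x - y) - c * x) τ) (hwτ : w τ = x) (hy : x ≤ y) (ha : 0 ≤ a)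
    (hc : 0 < c) (hx : 0 < x) : ¬ ∀ᶠ t in 𝓝[>] τ, x ≤ w t := fun hge => by
  have hD := hw.nonneg_of_eventually_ge (hwτ ▸ hge)
  nlinarith [mul_nonneg ha (sub_nonneg.2 hy), mul_pos hc hx]

theorem not_eventually_le_of_damped {w ψ : ℝ → ℝ} {τ x y a c k : ℝ}
    (hw : HasDerivAt w (a * (x - y) - c * x) τ) (hψ : HasDerivAt ψ (-k * ψ τ) τ)
    (hwτ : w τ = x) (hx : x = ψ τ) (hy : y ≤ x) (ha : 0 ≤ a) (hck : c < k) (hψτ : 0 < ψ τ) :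
    ¬ ∀ᶠ t in 𝓝[>] τ, w t ≤ ψ t := fun hle => by
  have hD := (hw.sub hψ).nonpos_of_eventually_le
    (hle.mono fun t ht => by simp only [Pi.sub_apply, hwτ, hx, sub_self, sub_nonpos, ht])
  subst hx
  nlinarith [mul_nonneg ha (sub_nonneg.2 hy), mul_lt_mul_of_pos_right hck hψτ]

section MaximumPrinciple

variable {κ t₀ r₀ δ k m M : ℝ} {rt : ℝ → ℝ} {U V : ℝ × ℝ → ℝ}

theorem mem_Ioo_of_forall_gt (hκ : 0 < κ) (ht₀ : t₀ ∈ Ioo 0 1)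
    (hrt : ContinuousOn rt (Icc 0 t₀)) (hrtt₀ : rt t₀ = r₀) (hm : 0 < m) (hM : 0 < M)
    (hdamp : ∀ t ∈ Ioc 0 t₀, damping κ t < k) (hδ : 0 < δ)
    {f g : ℝ × ℝ → ℝ} {s : ℝ} (hs : s ≤ 1) {p : ℝ × ℝ} (hp : p ∈ truncRegion κ t₀ r₀ rt δ)
    (hrtp : rt p.1 < p.2) (hf : DifferentiableAt ℝ f p)
    (htr : pdt f p + s * lam κ p.1 * pdr f p =
      coupling κ p.1 * (f p - g p) - damping κ p.1 * f p)
    (hfp : f p ∈ Icc (m / 2) (upperBarrier k M p.1))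
    (hgp : g p ∈ Icc (m / 2) (upperBarrier k M p.1))
    (hafter : ∀ q ∈ truncRegion κ t₀ r₀ rt δ, p.1 < q.1 →
      f q ∈ Icc (m / 2) (upperBarrier k M q.1)) :
    f p ∈ Ioo (m / 2) (upperBarrier k M p.1) := by
  have hp₁ : p.1 ∈ Ioo 0 1 := ⟨hp.1.1, hp.1.2.1.trans_lt ht₀.2⟩
  have hγ := hasDerivAt_charCurve (r₀ := r₀) hκ (Ioo_subset_Ioo_left (by norm_num) ht₀)
    (Ioo_subset_Ioo_left (by norm_num) hp₁) s
  have hw : HasDerivAt (fun t => f (t, charCurve κ t₀ r₀ p s t))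
      (coupling κ p.1 * (f p - g p) - damping κ p.1 * f p) p.1 :=
    htr ▸ hasDerivAt_comp_graph hf hγ (charCurve_self p s)
  have hwp : f (p.1, charCurve κ t₀ r₀ p s p.1) = f p := by simp
  have hev : ∀ᶠ t in 𝓝[>] p.1,
      f (t, charCurve κ t₀ r₀ p s t) ∈ Icc (m / 2) (upperBarrier k M t) := by
    filter_upwards [eventually_mem_truncRegion_charCurve hκ ht₀ hrt hrtt₀ hδ hs hp hrtp,
      self_mem_nhdsWithin] with t ht hpt
    exact hafter _ ht hpt
  have hcoup := coupling_nonneg hκ hp₁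
  refine ⟨hfp.1.lt_of_ne fun h => ?_, hfp.2.lt_of_ne fun h => ?_⟩
  · rw [← h] at hw hwp
    exact not_eventually_ge_of_damped hw hwp (h ▸ hgp.1) hcoup (damping_pos hκ hp₁)
      (half_pos hm) (hev.mono fun _ ht => ht.1)
  · exact not_eventually_le_of_damped hw (hasDerivAt_upperBarrier k M p.1) hwp h (h ▸ hgp.2)
      hcoup (hdamp p.1 ⟨hp₁.1, hp.1.2.1⟩) (upperBarrier_pos hM) (hev.mono fun _ ht => ht.2)


theorem margin_pos_of_forall_gt (hκ : 0 < κ) (ht₀ : t₀ ∈ Ioo 0 1)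
    (hrt : ContinuousOn rt (Icc 0 t₀)) (hrtt₀ : rt t₀ = r₀)
    (hUC1 : ContDiffOn ℝ 1 U (region κ t₀ r₀ rt)) (hVC1 : ContDiffOn ℝ 1 V (region κ t₀ r₀ rt))
    (hsys : Sys38 κ U V (region κ t₀ r₀ rt)) (hm : 0 < m) (hM : 0 < M)
    (hdamp : ∀ t ∈ Ioc 0 t₀, damping κ t < k) (hδ : 0 < δ) {p : ℝ × ℝ}
    (hp : p ∈ truncRegion κ t₀ r₀ rt δ) (hrtp : rt p.1 < p.2)
    (hafter : ∀ q ∈ truncRegion κ t₀ r₀ rt δ, p.1 < q.1 → 0 < margin k m M U V q) :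
    0 < margin k m M U V p := by
  have hpt₀ := fst_lt_of_mem_truncRegion hrtt₀ hδ hp hrtp
  have hnhds : region κ t₀ r₀ rt ∈ 𝓝 p :=
    region_mem_nhds hκ ht₀ hrt ⟨hp.1.1, hpt₀⟩ hrtp (by linarith [hp.2])
  have hU : DifferentiableAt ℝ U p := (hUC1.contDiffAt hnhds).differentiableAt one_ne_zero
  have hV : DifferentiableAt ℝ V p := (hVC1.contDiffAt hnhds).differentiableAt one_ne_zero
  have hafter' : ∀ q ∈ truncRegion κ t₀ r₀ rt δ, p.1 < q.1 →
      U q ∈ Icc (m / 2) (upperBarrier k M q.1) ∧ V q ∈ Icc (m / 2) (upperBarrier k M q.1) :=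
    fun q hq hpq => margin_nonneg_iff.1 (hafter q hq hpq).le
  have hlim : 0 ≤ margin k m M U V p := by
    have hcurve : Tendsto (fun t => (t, charCurve κ t₀ r₀ p 1 t)) (𝓝[>] p.1) (𝓝 p) := by
      have hγ := hasDerivAt_charCurve (r₀ := r₀) hκ (Ioo_subset_Ioo_left (by norm_num) ht₀)
        ⟨by linarith [hp.1.1], hpt₀.trans ht₀.2⟩ 1
      have h := continuousAt_id.prodMk hγ.continuousAt
      simpa using h.tendsto.mono_left nhdsWithin_le_nhds
    have hcont : ContinuousAt (margin k m M U V) p :=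
      (hUC1.continuousOn.margin hVC1.continuousOn).continuousAt hnhds
    refine ge_of_tendsto (hcont.tendsto.comp hcurve) ?_
    filter_upwards [eventually_mem_truncRegion_charCurve hκ ht₀ hrt hrtt₀ hδ le_rfl hp hrtp,
      self_mem_nhdsWithin] with t ht hpt
    exact (hafter _ ht hpt).le
  obtain ⟨hUp, hVp⟩ := margin_nonneg_iff.1 hlim
  obtain ⟨hUtr, hVtr⟩ := hsys.transport hp.1
  exact margin_pos_iff.2
    ⟨mem_Ioo_of_forall_gt hκ ht₀ hrt hrtt₀ hm hM hdamp hδ le_rfl hp hrtp hU hUtr hUp hVp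
      fun q hq hpq => (hafter' q hq hpq).1,
    mem_Ioo_of_forall_gt hκ ht₀ hrt hrtt₀ hm hM hdamp hδ (by norm_num) hp hrtp hV hVtr hVp hUp
      fun q hq hpq => (hafter' q hq hpq).2⟩

theorem margin_pos_of_snd_eq (ht₀ : t₀ ≤ 1) (hk : 0 ≤ k) (hm : 0 < m) (hmM : m ≤ M)
    (hbdry : ∀ t ∈ Ioc 0 t₀,
      m ≤ U (t, rt t) ∧ U (t, rt t) ≤ M ∧ m ≤ V (t, rt t) ∧ V (t, rt t) ≤ M)
    {p : ℝ × ℝ} (hp : p ∈ region κ t₀ r₀ rt) (hrtp : rt p.1 = p.2) :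
    0 < margin k m M U V p := by
  obtain ⟨hU₁, hU₂, hV₁, hV₂⟩ := hbdry p.1 ⟨hp.1, hp.2.1⟩
  simp only [hrtp, Prod.mk.eta] at hU₁ hU₂ hV₁ hV₂
  have hψ := two_mul_le_upperBarrier hk (hm.le.trans hmM) (hp.2.1.trans ht₀)
  exact margin_pos_iff.2 ⟨⟨by linarith, by linarith⟩, ⟨by linarith, by linarith⟩⟩

theorem margin_pos_of_mem_truncRegion (hκ : 0 < κ) (ht₀ : t₀ ∈ Ioo 0 1)
    (hrt : ContinuousOn rt (Icc 0 t₀)) (hrtt₀ : rt t₀ = r₀)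
    (hUC1 : ContDiffOn ℝ 1 U (region κ t₀ r₀ rt)) (hVC1 : ContDiffOn ℝ 1 V (region κ t₀ r₀ rt))
    (hsys : Sys38 κ U V (region κ t₀ r₀ rt)) (hm : 0 < m) (hmM : m ≤ M)
    (hbdry : ∀ t ∈ Ioc 0 t₀,
      m ≤ U (t, rt t) ∧ U (t, rt t) ≤ M ∧ m ≤ V (t, rt t) ∧ V (t, rt t) ≤ M)
    (hdamp : ∀ t ∈ Ioc 0 t₀, damping κ t < k) (hδ : 0 < δ) {p : ℝ × ℝ}
    (hp : p ∈ truncRegion κ t₀ r₀ rt δ) : 0 < margin k m M U V p := by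
  have hk := nonneg_of_forall_damping_lt hκ ht₀ hdamp
  by_contra! hp₀
  have hK := isCompact_truncRegion_inter (r₀ := r₀) hκ ht₀ hrt hδ.le hp.1.1
  have hB : IsCompact ({q ∈ truncRegion κ t₀ r₀ rt δ | p.1 ≤ q.1} ∩
      margin k m M U V ⁻¹' Iic 0) :=
    hK.of_isClosed_subset ((hUC1.continuousOn.margin hVC1.continuousOn).mono
      (fun q hq => hq.1.1) |>.preimage_isClosed_of_isClosed hK.isClosed isClosed_Iic)
      inter_subset_left
  obtain ⟨A, ⟨⟨hA, hpA⟩, hA₀⟩, hAmax⟩ :=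
    hB.exists_isMaxOn ⟨p, ⟨hp, le_rfl⟩, hp₀⟩ continuous_fst.continuousOn
  have hafter : ∀ q ∈ truncRegion κ t₀ r₀ rt δ, A.1 < q.1 → 0 < margin k m M U V q := by
    intro q hq hAq
    by_contra! hq₀
    exact (hAmax ⟨⟨hq, hpA.trans hAq.le⟩, hq₀⟩).not_gt hAq
  rcases hA.1.2.2.1.eq_or_lt with hrtA | hrtA
  · exact (margin_pos_of_snd_eq ht₀.2.le hk hm hmM hbdry hA.1 hrtA).not_ge hA₀
  · exact (margin_pos_of_forall_gt hκ ht₀ hrt hrtt₀ hUC1 hVC1 hsys hm (hm.trans_le hmM) hdamp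
      hδ hA hrtA hafter).not_ge hA₀


theorem margin_nonneg_of_mem_region (hκ : 0 < κ) (ht₀ : t₀ ∈ Ioo 0 1)
    (hrt : ContinuousOn rt (Icc 0 t₀)) (hrtt₀ : rt t₀ = r₀)
    (hUC1 : ContDiffOn ℝ 1 U (region κ t₀ r₀ rt)) (hVC1 : ContDiffOn ℝ 1 V (region κ t₀ r₀ rt))
    (hsys : Sys38 κ U V (region κ t₀ r₀ rt)) (hm : 0 < m) (hmM : m ≤ M)
    (hbdry : ∀ t ∈ Ioc 0 t₀,
      m ≤ U (t, rt t) ∧ U (t, rt t) ≤ M ∧ m ≤ V (t, rt t) ∧ V (t, rt t) ≤ M)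
    (hdamp : ∀ t ∈ Ioc 0 t₀, damping κ t < k) {p : ℝ × ℝ} (hp : p ∈ region κ t₀ r₀ rt) :
    0 ≤ margin k m M U V p := by
  rcases hp.2.2.1.eq_or_lt with hrtp | hrtp
  · exact (margin_pos_of_snd_eq ht₀.2.le (nonneg_of_forall_damping_lt hκ ht₀ hdamp) hm hmM hbdry
      hp hrtp).le
  have hev : ∀ᶠ ε in 𝓝[>] 0,
      (p.1, p.2 - ε) ∈ region κ t₀ r₀ rt ∧ 0 < margin k m M U V (p.1, p.2 - ε) := by
    filter_upwards [Ioo_mem_nhdsGT (sub_pos.2 hrtp)] with ε hε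
    have hmem : (p.1, p.2 - ε) ∈ truncRegion κ t₀ r₀ rt ε :=
      ⟨⟨hp.1, hp.2.1, by linarith [hε.2], by linarith [hp.2.2.2, hε.1]⟩,
        by linarith [hp.2.2.2]⟩
    exact ⟨hmem.1, margin_pos_of_mem_truncRegion hκ ht₀ hrt hrtt₀ hUC1 hVC1 hsys hm hmM hbdry
      hdamp hε.1 hmem⟩
  have hsegment : Tendsto (fun ε => (p.1, p.2 - ε)) (𝓝[>] 0) (𝓝[region κ t₀ r₀ rt] p) := by
    refine tendsto_nhdsWithin_iff.2 ⟨?_, hev.mono fun _ h => h.1⟩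
    have h : Continuous fun ε : ℝ => (p.1, p.2 - ε) := by fun_prop
    simpa using (h.tendsto 0).mono_left nhdsWithin_le_nhds
  exact ge_of_tendsto ((hUC1.continuousOn.margin hVC1.continuousOn p hp).tendsto.comp hsegment)
    (hev.mono fun _ h => h.2.le)

end MaximumPrinciple

theorem stmt_4_general (κ t₀ r₀ : ℝ) (hκ : 0 < κ) (ht₀ : t₀ ∈ Set.Ioo (0:ℝ) 1)
    (rt : ℝ → ℝ)
    (hrtC1 : ContDiffOn ℝ 1 rt (Set.Icc 0 t₀))
    (hrtt0 : rt t₀ = r₀)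
    (Ub Vb : ℝ × ℝ → ℝ)
    (hUC1 : ContDiffOn ℝ 1 Ub (region κ t₀ r₀ rt))
    (hVC1 : ContDiffOn ℝ 1 Vb (region κ t₀ r₀ rt))
    (hsys : Sys38 κ Ub Vb (region κ t₀ r₀ rt))
    (m₀ M₀ : ℝ) (hm₀ : 0 < m₀) (hm₀M₀ : m₀ ≤ M₀)
    (hbdry : ∀ t ∈ Set.Ioc (0:ℝ) t₀,
      m₀ ≤ Ub (t, rt t) ∧ Ub (t, rt t) ≤ M₀ ∧ m₀ ≤ Vb (t, rt t) ∧ Vb (t, rt t) ≤ M₀)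
    (k₀ : ℝ) (hk₀ : k₀ = (κ + 2)/(κ * (1 - t₀^2))) :
    ∀ p ∈ region κ t₀ r₀ rt,
      (1/2) * m₀ ≤ Ub p ∧ Ub p ≤ 2 * Real.exp k₀ * M₀ ∧
      (1/2) * m₀ ≤ Vb p ∧ Vb p ≤ 2 * Real.exp k₀ * M₀ := by
  have hdamp : ∀ t ∈ Ioc 0 t₀, damping κ t < k₀ :=
    fun t ht => hk₀ ▸ damping_lt hκ ht.1 ht.2 ht₀.2
  have hk₀_nonneg := nonneg_of_forall_damping_lt hκ ht₀ hdamp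
  intro p hp
  obtain ⟨⟨hU₁, hU₂⟩, hV₁, hV₂⟩ := margin_nonneg_iff.1 <| margin_nonneg_of_mem_region hκ ht₀
    hrtC1.continuousOn hrtt0 hUC1 hVC1 hsys hm₀ hm₀M₀ hbdry hdamp hp
  have hψ := upperBarrier_le hk₀_nonneg (hm₀.le.trans hm₀M₀) hp.1.le
  exact ⟨by linarith, hU₂.trans hψ, by linarith, hV₂.trans hψ⟩

/-- Lemma 3.2 (uniform two-sided bounds). -/
theorem stmt_4 (κ t₀ r₀ : ℝ) (hκ : 0 < κ) (ht₀ : t₀ ∈ Set.Ioo (0:ℝ) 1)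
    (hr₀ : 0 < r₀) (rt : ℝ → ℝ)
    (hrtC1 : ContDiffOn ℝ 1 rt (Set.Icc 0 t₀))
    (hrtmono : StrictMonoOn rt (Set.Icc 0 t₀))
    (hrt0 : rt 0 = 0) (hrtt0 : rt t₀ = r₀)
    (hspace : ∀ t ∈ Set.Ioc (0:ℝ) t₀, lam κ t < deriv rt t)
    (Ub Vb : ℝ × ℝ → ℝ)
    (hUC1 : ContDiffOn ℝ 1 Ub (region κ t₀ r₀ rt))
    (hVC1 : ContDiffOn ℝ 1 Vb (region κ t₀ r₀ rt))
    (hsys : Sys38 κ Ub Vb (region κ t₀ r₀ rt))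
    (hUcont : ContinuousOn Ub (region κ t₀ r₀ rt ∪ {p : ℝ × ℝ | ∃ t ∈ Set.Ioc (0:ℝ) t₀, p = (t, rt t)}))
    (hVcont : ContinuousOn Vb (region κ t₀ r₀ rt ∪ {p : ℝ × ℝ | ∃ t ∈ Set.Ioc (0:ℝ) t₀, p = (t, rt t)}))
    (m₀ M₀ : ℝ) (hm₀ : 0 < m₀) (hm₀M₀ : m₀ ≤ M₀)
    (hbdry : ∀ t ∈ Set.Ioc (0:ℝ) t₀,
      m₀ ≤ Ub (t, rt t) ∧ Ub (t, rt t) ≤ M₀ ∧ m₀ ≤ Vb (t, rt t) ∧ Vb (t, rt t) ≤ M₀)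
    (k₀ : ℝ) (hk₀ : k₀ = (κ + 2)/(κ * (1 - t₀^2))) :
    ∀ p ∈ region κ t₀ r₀ rt,
      (1/2) * m₀ ≤ Ub p ∧ Ub p ≤ 2 * Real.exp k₀ * M₀ ∧
      (1/2) * m₀ ≤ Vb p ∧ Vb p ≤ 2 * Real.exp k₀ * M₀ :=
  stmt_4_general κ t₀ r₀ hκ ht₀ rt hrtC1 hrtt0 Ub Vb hUC1 hVC1 hsys m₀ M₀ hm₀ hm₀M₀ hbdry k₀ hk₀
end

section
/- Characteristic decomposition (equations (2.15)). Let κ > 0 and let Ω ⊂ ℝ² be open. Let θ, ω : Ω → ℝ be C² functions with ω(x,y) ∈ (0, π/2). Define the directional derivative operators ∂̄⁺ = cos(θ+ω)∂_x + sin(θ+ω)∂_y and ∂̄⁻ = cos(θ−ω)∂_x + sin(θ−ω)∂_y, and set Ξ = (1/(4κ))·ln( sin²ω / (κ + sin²ω) ). Suppose that on Ω: ∂̄⁺θ + sin(2ω)·∂̄⁺Ξ = 0 and ∂̄⁻θ − sin(2ω)·∂̄⁻Ξ = 0 (system (2.13)). Then the functions U := ∂̄⁺Ξ and V := ∂̄⁻Ξ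 satisfy on Ω: ∂̄⁻U = (κU/cos²ω)·(U − cos(2ω)·V) + (U/cos²ω)·(U + cos²(2ω)·V) and ∂̄⁺V = (κV/cos²ω)·(V − cos(2ω)·U) + (V/cos²ω)·(V + cos²(2ω)·U). -/
/-!
With `U = ∂̄⁺Ξ`, `V = ∂̄⁻Ξ`, the system says `∂̄⁺θ = -sin 2ω · U` and `∂̄⁻θ = sin 2ω · V`.
Differentiating the first equation along `∂̄⁻` and the second along `∂̄⁺` and adding gives
`∂̄⁻U + ∂̄⁺V` in terms of the commutator `[∂̄⁻, ∂̄⁺]θ`, while `[∂̄⁻, ∂̄⁺]Ξ = ∂̄⁻U - ∂̄⁺V`.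
For unit vector fields the commutator is first order,
`[∂̄_β, ∂̄_α] f = (∂̄_β α) ∂̄_α^⊥ f - (∂̄_α β) ∂̄_β^⊥ f`, and since `α - β = 2ω` the normal
derivatives `∂̄^⊥` are combinations of `∂̄⁺` and `∂̄⁻`. This yields
`sin 2ω · ∂̄⁻U = sin 2ω · U (U + cos 2ω · V) + ∂̄⁺ω (U - cos 2ω · V)`, and `Ξ = F(ω)` with
`F'(ω) = cos ω / (2 sin ω (κ + sin² ω))` turns `∂̄⁺ω` into a multiple of `U`.
The second identity is the first one for `-ω`.
-/

/-- Partial derivative in the first (x) variable. -/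
noncomputable def pdx (f : ℝ × ℝ → ℝ) (p : ℝ × ℝ) : ℝ := fderiv ℝ f p (1, 0)

/-- Partial derivative in the second (y) variable. -/
noncomputable def pdy (f : ℝ × ℝ → ℝ) (p : ℝ × ℝ) : ℝ := fderiv ℝ f p (0, 1)

/-- Derivative along the positive characteristic direction (inclination θ+ω). -/
noncomputable def Dp (θ ω f : ℝ × ℝ → ℝ) (p : ℝ × ℝ) : ℝ :=
  Real.cos (θ p + ω p) * pdx f p + Real.sin (θ p + ω p) * pdy f p

/-- Derivative along the negative characteristic direction (inclination θ−ω). -/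
noncomputable def Dm (θ ω f : ℝ × ℝ → ℝ) (p : ℝ × ℝ) : ℝ :=
  Real.cos (θ p - ω p) * pdx f p + Real.sin (θ p - ω p) * pdy f p

open Real Filter Topology

noncomputable def dirDeriv (φ f : ℝ × ℝ → ℝ) (p : ℝ × ℝ) : ℝ :=
  fderiv ℝ f p (cos (φ p), sin (φ p))

lemma apply_cos_sin (L : ℝ × ℝ →L[ℝ] ℝ) (t : ℝ) :
    L (cos t, sin t) = cos t * L (1, 0) + sin t * L (0, 1) := by
  have h : ((cos t, sin t) : ℝ × ℝ) = cos t • ((1 : ℝ), (0 : ℝ)) + sin t • ((0 : ℝ), (1 : ℝ)) := by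
    simp
  rw [h, map_add, map_smul, map_smul, smul_eq_mul, smul_eq_mul]

lemma Dp_eq_dirDeriv (θ ω f : ℝ × ℝ → ℝ) : Dp θ ω f = dirDeriv (fun q => θ q + ω q) f := by
  ext p
  rw [Dp, dirDeriv, apply_cos_sin, pdx, pdy]

lemma Dm_eq_dirDeriv (θ ω f : ℝ × ℝ → ℝ) : Dm θ ω f = dirDeriv (fun q => θ q - ω q) f := by
  ext p
  rw [Dm, dirDeriv, apply_cos_sin, pdx, pdy]

lemma Dp_neg_right (θ ω f : ℝ × ℝ → ℝ) : Dp θ (fun q => -ω q) f = Dm θ ω f := by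
  ext p
  simp only [Dp, Dm, sub_eq_add_neg]

lemma Dm_neg_right (θ ω f : ℝ × ℝ → ℝ) : Dm θ (fun q => -ω q) f = Dp θ ω f := by
  ext p
  simp only [Dp, Dm, sub_neg_eq_add]

section dirDeriv

variable {φ ψ f g : ℝ × ℝ → ℝ} {p : ℝ × ℝ}

lemma hasFDerivAt_dirDeriv (hφ : DifferentiableAt ℝ φ p)
    (hf : DifferentiableAt ℝ (fderiv ℝ f) p) :
    HasFDerivAt (dirDeriv φ f)
      (dirDeriv (fun q => φ q + π / 2) f p • fderiv ℝ φ p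
        + (fderiv ℝ (fderiv ℝ f) p).flip (cos (φ p), sin (φ p))) p := by
  have hdir : HasFDerivAt (fun q => (cos (φ q), sin (φ q)))
      ((-sin (φ p) • fderiv ℝ φ p).prod (cos (φ p) • fderiv ℝ φ p)) p :=
    ((hasDerivAt_cos _).comp_hasFDerivAt p hφ.hasFDerivAt).prodMk
      ((hasDerivAt_sin _).comp_hasFDerivAt p hφ.hasFDerivAt)
  refine (hf.hasFDerivAt.clm_apply hdir).congr_fderiv (congrArg (· + _) ?_)
  refine ContinuousLinearMap.ext fun v => ?_
  have hv : ((-sin (φ p) * fderiv ℝ φ p v, cos (φ p) * fderiv ℝ φ p v) : ℝ × ℝ)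
      = fderiv ℝ φ p v • (-sin (φ p), cos (φ p)) := by
    ext <;> simp [mul_comm]
  simp only [ContinuousLinearMap.comp_apply, ContinuousLinearMap.prod_apply,
    smul_apply, smul_eq_mul, hv, map_smul, dirDeriv,
    cos_add_pi_div_two, sin_add_pi_div_two, mul_comm]

lemma differentiableAt_dirDeriv (hφ : DifferentiableAt ℝ φ p) (hf : ContDiffAt ℝ 2 f p) :
    DifferentiableAt ℝ (dirDeriv φ f) p :=
  (hasFDerivAt_dirDeriv hφ
    ((hf.fderiv_right (m := 1) (by norm_num)).differentiableAt one_ne_zero)).differentiableAt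

lemma dirDeriv_dirDeriv (hφ : DifferentiableAt ℝ φ p)
    (hf : DifferentiableAt ℝ (fderiv ℝ f) p) :
    dirDeriv ψ (dirDeriv φ f) p = dirDeriv ψ φ p * dirDeriv (fun q => φ q + π / 2) f p
      + fderiv ℝ (fderiv ℝ f) p (cos (ψ p), sin (ψ p)) (cos (φ p), sin (φ p)) := by
  rw [dirDeriv, (hasFDerivAt_dirDeriv hφ hf).fderiv]
  simp only [add_apply, smul_apply, smul_eq_mul, ContinuousLinearMap.flip_apply, dirDeriv,
    mul_comm]

lemma dirDeriv_comm (hφ : DifferentiableAt ℝ φ p) (hψ : DifferentiableAt ℝ ψ p)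
    (hf : ContDiffAt ℝ 2 f p) :
    dirDeriv ψ (dirDeriv φ f) p - dirDeriv φ (dirDeriv ψ f) p
      = dirDeriv ψ φ p * dirDeriv (fun q => φ q + π / 2) f p
        - dirDeriv φ ψ p * dirDeriv (fun q => ψ q + π / 2) f p := by
  have hf' := (hf.fderiv_right (m := 1) (by norm_num)).differentiableAt one_ne_zero
  rw [dirDeriv_dirDeriv hφ hf', dirDeriv_dirDeriv hψ hf',
    hf.isSymmSndFDerivAt (by norm_num) (cos (ψ p), sin (ψ p))]
  ring

lemma sin_mul_dirDeriv_rotate {δ : ℝ} (h : φ p = ψ p + δ) :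
    sin δ * dirDeriv (fun q => φ q + π / 2) f p = cos δ * dirDeriv φ f p - dirDeriv ψ f p ∧
    sin δ * dirDeriv (fun q => ψ q + π / 2) f p = dirDeriv φ f p - cos δ * dirDeriv ψ f p := by
  simp only [dirDeriv, h, apply_cos_sin]
  simp only [cos_add_pi_div_two, sin_add_pi_div_two]
  simp only [cos_add, sin_add]
  constructor
  · linear_combination -(cos (ψ p) * fderiv ℝ f p (1, 0) + sin (ψ p) * fderiv ℝ f p (0, 1))
      * sin_sq_add_cos_sq δ
  · ring

lemma dirDeriv_add (hf : DifferentiableAt ℝ f p) (hg : DifferentiableAt ℝ g p) :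
    dirDeriv φ (fun q => f q + g q) p = dirDeriv φ f p + dirDeriv φ g p := by
  rw [dirDeriv, fderiv_fun_add hf hg, add_apply, dirDeriv, dirDeriv]

lemma dirDeriv_sub (hf : DifferentiableAt ℝ f p) (hg : DifferentiableAt ℝ g p) :
    dirDeriv φ (fun q => f q - g q) p = dirDeriv φ f p - dirDeriv φ g p := by
  rw [dirDeriv, fderiv_fun_sub hf hg, sub_apply, dirDeriv, dirDeriv]

lemma dirDeriv_mul (hf : DifferentiableAt ℝ f p) (hg : DifferentiableAt ℝ g p) :
    dirDeriv φ (fun q => f q * g q) p = f p * dirDeriv φ g p + g p * dirDeriv φ f p := by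
  simp only [dirDeriv, fderiv_fun_mul hf hg, add_apply, smul_apply, smul_eq_mul]

lemma dirDeriv_neg : dirDeriv φ (fun q => -f q) p = -dirDeriv φ f p := by
  rw [dirDeriv, fderiv_fun_neg, neg_apply, dirDeriv]

lemma dirDeriv_comp {h : ℝ → ℝ} {h' : ℝ} (hh : HasDerivAt h h' (f p))
    (hf : DifferentiableAt ℝ f p) :
    dirDeriv φ (fun q => h (f q)) p = h' * dirDeriv φ f p := by
  rw [dirDeriv, show (fun q => h (f q)) = h ∘ f from rfl,
    (hh.comp_hasFDerivAt p hf.hasFDerivAt).fderiv, dirDeriv, smul_apply, smul_eq_mul]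

lemma dirDeriv_eq_zero_of_eventuallyEq (hf : f =ᶠ[𝓝 p] 0) : dirDeriv φ f p = 0 := by
  rw [dirDeriv, hf.fderiv_eq, fderiv_zero, Pi.zero_apply, zero_apply]

end dirDeriv

section system

variable {θ ω Ξ f : ℝ × ℝ → ℝ} {p : ℝ × ℝ}

lemma sin_two_mul_mul_Dm_Dp_sub_Dp_Dm (hθ : DifferentiableAt ℝ θ p)
    (hω : DifferentiableAt ℝ ω p) (hf : ContDiffAt ℝ 2 f p) :
    sin (2 * ω p) * (Dm θ ω (Dp θ ω f) p - Dp θ ω (Dm θ ω f) p)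
      = (Dm θ ω θ p + Dm θ ω ω p) * (cos (2 * ω p) * Dp θ ω f p - Dm θ ω f p)
        - (Dp θ ω θ p - Dp θ ω ω p) * (Dp θ ω f p - cos (2 * ω p) * Dm θ ω f p) := by
  simp only [Dp_eq_dirDeriv, Dm_eq_dirDeriv]
  obtain ⟨hrot_a, hrot_b⟩ := sin_mul_dirDeriv_rotate (f := f) (φ := fun q => θ q + ω q)
    (ψ := fun q => θ q - ω q) (δ := 2 * ω p) (by ring)
  rw [dirDeriv_comm (hθ.fun_add hω) (hθ.fun_sub hω) hf, ← dirDeriv_add hθ hω,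
    ← dirDeriv_sub hθ hω, ← hrot_a, ← hrot_b]
  ring

theorem sin_two_mul_mul_Dm_Dp_eq (hθ : ContDiffAt ℝ 2 θ p) (hω : DifferentiableAt ℝ ω p)
    (hΞ : ContDiffAt ℝ 2 Ξ p) (hs : sin (2 * ω p) ≠ 0)
    (hsys : ∀ᶠ q in 𝓝 p, Dp θ ω θ q + sin (2 * ω q) * Dp θ ω Ξ q = 0 ∧
      Dm θ ω θ q - sin (2 * ω q) * Dm θ ω Ξ q = 0) :
    sin (2 * ω p) * Dm θ ω (Dp θ ω Ξ) p
      = sin (2 * ω p) * Dp θ ω Ξ p * (Dp θ ω Ξ p + cos (2 * ω p) * Dm θ ω Ξ p)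
        + Dp θ ω ω p * (Dp θ ω Ξ p - cos (2 * ω p) * Dm θ ω Ξ p) := by
  have hθ1 : DifferentiableAt ℝ θ p := hθ.differentiableAt (by norm_num)
  have hcommθ := sin_two_mul_mul_Dm_Dp_sub_Dp_Dm hθ1 hω hθ
  have hcommΞ := sin_two_mul_mul_Dm_Dp_sub_Dp_Dm hθ1 hω hΞ
  simp only [Dp_eq_dirDeriv, Dm_eq_dirDeriv] at hsys hcommθ hcommΞ ⊢
  set a := fun q => θ q + ω q
  set b := fun q => θ q - ω q
  have ha : DifferentiableAt ℝ a p := hθ1.add hω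
  have hb : DifferentiableAt ℝ b p := hθ1.sub hω
  have hsin : HasDerivAt (fun t => sin (2 * t)) (cos (2 * ω p) * 2) (ω p) := by
    simpa using ((hasDerivAt_id (ω p)).const_mul 2).sin
  have hsinω : DifferentiableAt ℝ (fun q => sin (2 * ω q)) p :=
    hsin.differentiableAt.comp p hω
  -- each equation of the system, differentiated along the other family of characteristics
  have hDbsys := dirDeriv_eq_zero_of_eventuallyEq (φ := b) (hsys.mono fun q hq => hq.1)
  rw [dirDeriv_add (differentiableAt_dirDeriv ha hθ)
      (hsinω.fun_mul (differentiableAt_dirDeriv ha hΞ)),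
    dirDeriv_mul hsinω (differentiableAt_dirDeriv ha hΞ), dirDeriv_comp hsin hω] at hDbsys
  have hDasys := dirDeriv_eq_zero_of_eventuallyEq (φ := a) (hsys.mono fun q hq => hq.2)
  rw [dirDeriv_sub (differentiableAt_dirDeriv hb hθ)
      (hsinω.fun_mul (differentiableAt_dirDeriv hb hΞ)),
    dirDeriv_mul hsinω (differentiableAt_dirDeriv hb hΞ), dirDeriv_comp hsin hω] at hDasys
  obtain ⟨hsysa, hsysb⟩ := hsys.self_of_nhds
  have hθa : dirDeriv a θ p = -(sin (2 * ω p) * dirDeriv a Ξ p) := by linear_combination hsysa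
  have hθb : dirDeriv b θ p = sin (2 * ω p) * dirDeriv b Ξ p := by linear_combination hsysb
  rw [hθa, hθb] at hcommθ hcommΞ
  -- half the sum of `s (∂̄⁻U + ∂̄⁺V)` (differentiated system minus the commutator for `θ`)
  -- and `s (∂̄⁻U - ∂̄⁺V)` (the commutator for `Ξ`)
  refine mul_left_cancel₀ hs ?_
  linear_combination (1 / 2) * (sin (2 * ω p) * hDbsys - sin (2 * ω p) * hDasys
    - hcommθ + sin (2 * ω p) * hcommΞ)

/-- `ω ↦ -ω` exchanges the two families of characteristics and preserves the system. -/
theorem sin_two_mul_mul_Dp_Dm_eq (hθ : ContDiffAt ℝ 2 θ p) (hω : DifferentiableAt ℝ ω p)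
    (hΞ : ContDiffAt ℝ 2 Ξ p) (hs : sin (2 * ω p) ≠ 0)
    (hsys : ∀ᶠ q in 𝓝 p, Dp θ ω θ q + sin (2 * ω q) * Dp θ ω Ξ q = 0 ∧
      Dm θ ω θ q - sin (2 * ω q) * Dm θ ω Ξ q = 0) :
    sin (2 * ω p) * Dp θ ω (Dm θ ω Ξ) p
      = sin (2 * ω p) * Dm θ ω Ξ p * (Dm θ ω Ξ p + cos (2 * ω p) * Dp θ ω Ξ p)
        + Dm θ ω ω p * (Dm θ ω Ξ p - cos (2 * ω p) * Dp θ ω Ξ p) := by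
  have h := sin_two_mul_mul_Dm_Dp_eq hθ hω.fun_neg hΞ
    (by simpa only [mul_neg, sin_neg, neg_ne_zero])
    (hsys.mono fun q hq => by
      simpa only [Dp_neg_right, Dm_neg_right, mul_neg, sin_neg, neg_mul, sub_neg_eq_add,
        ← sub_eq_add_neg] using hq.symm)
  have hneg : Dm θ ω (fun q => -ω q) p = -Dm θ ω ω p := by
    simp only [Dm_eq_dirDeriv, dirDeriv_neg]
  simp only [Dp_neg_right, Dm_neg_right, mul_neg, sin_neg, cos_neg, hneg] at h
  linear_combination -h

end system

noncomputable def xi (κ t : ℝ) : ℝ := 1 / (4 * κ) * log (sin t ^ 2 / (κ + sin t ^ 2))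

section xi

variable {κ t : ℝ}

lemma contDiffAt_xi {n : WithTop ℕ∞} (hκ : 0 < κ) (ht : sin t ≠ 0) : ContDiffAt ℝ n (xi κ) t := by
  have hden : ∀ s : ℝ, κ + sin s ^ 2 ≠ 0 := fun s => by positivity
  refine contDiffAt_const.mul (ContDiffAt.log ?_ (by field_simp; positivity))
  exact ((contDiff_sin.pow 2).div (contDiff_const.add (contDiff_sin.pow 2)) hden).contDiffAt

lemma hasDerivAt_xi (hκ : 0 < κ) (ht : sin t ≠ 0) :
    HasDerivAt (xi κ) (cos t / (2 * sin t * (κ + sin t ^ 2))) t := by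
  have hden : κ + sin t ^ 2 ≠ 0 := by positivity
  have hsq : HasDerivAt (fun s => sin s ^ 2) (2 * sin t * cos t) t := by
    simpa using (hasDerivAt_sin t).fun_pow 2
  have h := (((hsq.div (hsq.const_add κ) hden).log
    (div_ne_zero (pow_ne_zero 2 ht) hden)).const_mul (1 / (4 * κ)))
  refine h.congr_deriv ?_
  rw [Pi.div_apply]
  field_simp
  ring

end xi

lemma eq_of_sin_two_mul_mul_eq {κ w U V W A : ℝ} (hκ : 0 < κ) (hsin : sin w ≠ 0)
    (hcos : cos w ≠ 0)
    (hA : sin (2 * w) * A = sin (2 * w) * U * (U + cos (2 * w) * V) + W * (U - cos (2 * w) * V))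
    (hU : U = cos w / (2 * sin w * (κ + sin w ^ 2)) * W) :
    A = κ * U / cos w ^ 2 * (U - cos (2 * w) * V) + U / cos w ^ 2 * (U + cos (2 * w) ^ 2 * V) := by
  have hW : cos w * W = 2 * sin w * (κ + sin w ^ 2) * U := by
    rw [hU]
    field_simp
  rw [sin_two_mul] at hA
  rw [div_mul_eq_mul_div, div_mul_eq_mul_div, ← add_div, eq_div_iff (by positivity)]
  refine mul_left_cancel₀ (by positivity : 2 * sin w ≠ 0) ?_
  linear_combination cos w * hA + (U - cos (2 * w) * V) * hW
    + 2 * sin w * U ^ 2 * sin_sq_add_cos_sq w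
    - 2 * sin w * U * cos (2 * w) * V * cos_two_mul' w

/-- Characteristic decomposition (equations (2.15)). -/
theorem stmt_10 (κ : ℝ) (hκ : 0 < κ) (Ω : Set (ℝ × ℝ)) (hΩ : IsOpen Ω)
    (θ ω Ξ : ℝ × ℝ → ℝ)
    (hθ : ContDiffOn ℝ 2 θ Ω) (hω : ContDiffOn ℝ 2 ω Ω)
    (hrange : ∀ p ∈ Ω, ω p ∈ Set.Ioo 0 (Real.pi/2))
    (hΞ : ∀ p, Ξ p = (1/(4*κ)) *
      Real.log ((Real.sin (ω p))^2 / (κ + (Real.sin (ω p))^2)))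
    (hsys : ∀ p ∈ Ω,
      Dp θ ω θ p + Real.sin (2 * ω p) * Dp θ ω Ξ p = 0 ∧
      Dm θ ω θ p - Real.sin (2 * ω p) * Dm θ ω Ξ p = 0) :
    ∀ p ∈ Ω,
      Dm θ ω (fun q => Dp θ ω Ξ q) p =
        (κ * Dp θ ω Ξ p / (Real.cos (ω p))^2) *
          (Dp θ ω Ξ p - Real.cos (2 * ω p) * Dm θ ω Ξ p)
        + (Dp θ ω Ξ p / (Real.cos (ω p))^2) *
          (Dp θ ω Ξ p + (Real.cos (2 * ω p))^2 * Dm θ ω Ξ p) ∧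
      Dp θ ω (fun q => Dm θ ω Ξ q) p =
        (κ * Dm θ ω Ξ p / (Real.cos (ω p))^2) *
          (Dm θ ω Ξ p - Real.cos (2 * ω p) * Dp θ ω Ξ p)
        + (Dm θ ω Ξ p / (Real.cos (ω p))^2) *
          (Dm θ ω Ξ p + (Real.cos (2 * ω p))^2 * Dp θ ω Ξ p) := by
  intro p hp
  obtain ⟨hω₀, hωπ⟩ := hrange p hp
  have hsin : 0 < sin (ω p) := sin_pos_of_pos_of_lt_pi hω₀ (by linarith [pi_pos])
  have hcos : 0 < cos (ω p) := cos_pos_of_mem_Ioo ⟨by linarith [pi_pos], hωπ⟩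
  have hθp : ContDiffAt ℝ 2 θ p := hθ.contDiffAt (hΩ.mem_nhds hp)
  have hωp : DifferentiableAt ℝ ω p :=
    (hω.contDiffAt (hΩ.mem_nhds hp)).differentiableAt (by norm_num)
  have hΞω : Ξ = fun q => xi κ (ω q) := funext hΞ
  have hΞp : ContDiffAt ℝ 2 Ξ p :=
    hΞω ▸ (contDiffAt_xi hκ hsin.ne').comp p (hω.contDiffAt (hΩ.mem_nhds hp))
  have hs : sin (2 * ω p) ≠ 0 := by rw [sin_two_mul]; positivity
  have hsysp := eventually_of_mem (hΩ.mem_nhds hp) hsys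
  have hdirDerivΞ : ∀ φ, dirDeriv φ Ξ p
      = cos (ω p) / (2 * sin (ω p) * (κ + sin (ω p) ^ 2)) * dirDeriv φ ω p := fun φ =>
    hΞω ▸ dirDeriv_comp (hasDerivAt_xi hκ hsin.ne') hωp
  exact ⟨eq_of_sin_two_mul_mul_eq hκ hsin.ne' hcos.ne'
      (sin_two_mul_mul_Dm_Dp_eq hθp hωp hΞp hs hsysp) (by simp only [Dp_eq_dirDeriv, hdirDerivΞ]),
    eq_of_sin_two_mul_mul_eq hκ hsin.ne' hcos.ne'
      (sin_two_mul_mul_Dp_Dm_eq hθp hωp hΞp hs hsysp) (by simp only [Dm_eq_dirDeriv, hdirDerivΞ])⟩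
end

section
/- Linearization by inversion ((3.6) implies (3.8)). Let κ > 0 and let D ⊂ {(t,r) ∈ ℝ² : 0 < t < 1} be open. Set F(t) = (1−t²)(κ+1−t²) and λ(t) = √(1−t²)·t²/F(t). Let (U, V) : D → ℝ² be C¹ with U(t,r) ≠ 0 and V(t,r) ≠ 0 on D, satisfying system (3.6): ∂_t U + λ(t)·∂_r U = −((κ+1)U/(2F(t)V))·(U+V)/t + ((κ+2−2t²)/F(t))·U·t and ∂_t V − λ(t)·∂_r V = −((κ+1)V/(2F(t)U))·(U+V)/t + ((κ+2−2t²)/F(t))·V·t. Then the functions Ū := 1/U and V̄ := −1/V satisfy on D the linear system (3.8): ∂_t Ū + λ(t)·∂_r Ū = (Ū−V̄)/(2t) + ((κ+2−t²)·t/(2F(t)))·(Ū−V̄) − ((κ+2−2t²)·t/F(t))·Ū and ∂_t V̄ − λ(t)·∂_r V̄ = (V̄−Ū)/(2t) − ((κ+2−t²)·t/(2F(t)))·(Ū−V̄) − ((κ+2−2t²)·t/F(t))·V̄. -/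
theorem fderiv_one_div_apply {𝕜 E : Type*} [NontriviallyNormedField 𝕜] [NormedAddCommGroup E]
    [NormedSpace 𝕜 E] {f : E → 𝕜} {p : E} (hf : DifferentiableAt 𝕜 f p) (hfp : f p ≠ 0) (v : E) :
    fderiv 𝕜 (fun q => 1 / f q) p v = -fderiv 𝕜 f p v / f p ^ 2 := by
  have h := (hasDerivAt_inv hfp).comp_hasFDerivAt p hf.hasFDerivAt
  simp only [one_div]
  rw [show (fun q => (f q)⁻¹) = (fun x => x⁻¹) ∘ f from rfl, h.fderiv]
  simp only [smul_apply, smul_eq_mul]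
  ring

theorem pdt_add_mul_pdr_one_div {f : ℝ × ℝ → ℝ} {p : ℝ × ℝ} (hf : DifferentiableAt ℝ f p)
    (hfp : f p ≠ 0) (c : ℝ) :
    pdt (fun q => 1 / f q) p + c * pdr (fun q => 1 / f q) p = -(pdt f p + c * pdr f p) / f p ^ 2 := by
  simp only [pdt, pdr, fderiv_one_div_apply hf hfp]
  ring

theorem pdt_add_mul_pdr_neg_one_div {f : ℝ × ℝ → ℝ} {p : ℝ × ℝ} (hf : DifferentiableAt ℝ f p)
    (hfp : f p ≠ 0) (c : ℝ) :
    pdt (fun q => -(1 / f q)) p + c * pdr (fun q => -(1 / f q)) p =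
      (pdt f p + c * pdr f p) / f p ^ 2 := by
  simp only [pdt, pdr, fderiv_fun_neg, neg_apply, fderiv_one_div_apply hf hfp]
  ring

theorem one_sub_sq_mul_add_one_sub_sq_pos {κ t : ℝ} (hκ : 0 ≤ κ) (ht0 : 0 < t) (ht1 : t < 1) :
    0 < (1 - t ^ 2) * (κ + 1 - t ^ 2) := by
  have ht2 : t ^ 2 < 1 := by nlinarith
  exact mul_pos (by linarith) (by linarith)

section Inversion

variable {κ t F u v : ℝ}

theorem inversion_rhs_fst (hF : F + (κ + 2 - t ^ 2) * t ^ 2 = κ + 1) (hF0 : F ≠ 0) (ht : t ≠ 0)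
    (hu : u ≠ 0) (hv : v ≠ 0) :
    -(-((κ + 1) * u / (2 * F * v)) * ((u + v) / t) + ((κ + 2 - 2 * t ^ 2) / F) * u * t) / u ^ 2 =
      (1 / u - -(1 / v)) / (2 * t)
      + ((κ + 2 - t ^ 2) * t / (2 * F)) * (1 / u - -(1 / v))
      - ((κ + 2 - 2 * t ^ 2) * t / F) * (1 / u) := by
  rw [← hF]
  field_simp
  ring

theorem inversion_rhs_snd (hF : F + (κ + 2 - t ^ 2) * t ^ 2 = κ + 1) (hF0 : F ≠ 0) (ht : t ≠ 0)
    (hu : u ≠ 0) (hv : v ≠ 0) :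
    (-((κ + 1) * v / (2 * F * u)) * ((u + v) / t) + ((κ + 2 - 2 * t ^ 2) / F) * v * t) / v ^ 2 =
      (-(1 / v) - 1 / u) / (2 * t)
      - ((κ + 2 - t ^ 2) * t / (2 * F)) * (1 / u - -(1 / v))
      - ((κ + 2 - 2 * t ^ 2) * t / F) * (-(1 / v)) := by
  rw [← hF]
  field_simp
  ring

end Inversion

theorem stmt_11_general (κ : ℝ) (hκ : 0 < κ)
    (D : Set (ℝ × ℝ)) (hD : IsOpen D) (hDsub : D ⊆ {p : ℝ × ℝ | 0 < p.1 ∧ p.1 < 1})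
    (F lam : ℝ → ℝ)
    (hF : ∀ t, F t = (1 - t^2) * (κ + 1 - t^2))
    (U V : ℝ × ℝ → ℝ)
    (hU : ContDiffOn ℝ 1 U D) (hV : ContDiffOn ℝ 1 V D)
    (hUne : ∀ p ∈ D, U p ≠ 0) (hVne : ∀ p ∈ D, V p ≠ 0)
    (hsys : ∀ p ∈ D,
      pdt U p + lam p.1 * pdr U p =
        -((κ + 1) * U p / (2 * F p.1 * V p)) * ((U p + V p)/p.1)
        + ((κ + 2 - 2*p.1^2)/F p.1) * U p * p.1 ∧
      pdt V p - lam p.1 * pdr V p =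
        -((κ + 1) * V p / (2 * F p.1 * U p)) * ((U p + V p)/p.1)
        + ((κ + 2 - 2*p.1^2)/F p.1) * V p * p.1) :
    ∀ p ∈ D,
      pdt (fun q => 1 / U q) p + lam p.1 * pdr (fun q => 1 / U q) p =
        (1 / U p - -(1 / V p)) / (2 * p.1)
        + ((κ + 2 - p.1^2) * p.1 / (2 * F p.1)) * (1 / U p - -(1 / V p))
        - ((κ + 2 - 2*p.1^2) * p.1 / F p.1) * (1 / U p) ∧
      pdt (fun q => -(1 / V q)) p - lam p.1 * pdr (fun q => -(1 / V q)) p =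
        (-(1 / V p) - 1 / U p) / (2 * p.1)
        - ((κ + 2 - p.1^2) * p.1 / (2 * F p.1)) * (1 / U p - -(1 / V p))
        - ((κ + 2 - 2*p.1^2) * p.1 / F p.1) * (-(1 / V p)) := by
  intro p hp
  obtain ⟨ht0, ht1⟩ := hDsub hp
  have hF0 : F p.1 ≠ 0 := (hF p.1 ▸ one_sub_sq_mul_add_one_sub_sq_pos hκ.le ht0 ht1).ne'
  have hFκ : F p.1 + (κ + 2 - p.1 ^ 2) * p.1 ^ 2 = κ + 1 := by rw [hF]; ring
  have hUd : DifferentiableAt ℝ U p :=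
    (hU.contDiffAt (hD.mem_nhds hp)).differentiableAt one_ne_zero
  have hVd : DifferentiableAt ℝ V p :=
    (hV.contDiffAt (hD.mem_nhds hp)).differentiableAt one_ne_zero
  obtain ⟨hUsys, hVsys⟩ := hsys p hp
  constructor
  · rw [pdt_add_mul_pdr_one_div hUd (hUne p hp), hUsys]
    exact inversion_rhs_fst hFκ hF0 ht0.ne' (hUne p hp) (hVne p hp)
  · rw [sub_eq_add_neg, ← neg_mul, pdt_add_mul_pdr_neg_one_div hVd (hVne p hp), neg_mul,
      ← sub_eq_add_neg, hVsys]
    exact inversion_rhs_snd hFκ hF0 ht0.ne' (hUne p hp) (hVne p hp)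

/-- Linearization by inversion ((3.6) implies (3.8)). -/
theorem stmt_11 (κ : ℝ) (hκ : 0 < κ)
    (D : Set (ℝ × ℝ)) (hD : IsOpen D) (hDsub : D ⊆ {p : ℝ × ℝ | 0 < p.1 ∧ p.1 < 1})
    (F lam : ℝ → ℝ)
    (hF : ∀ t, F t = (1 - t^2) * (κ + 1 - t^2))
    (hlam : ∀ t, lam t = Real.sqrt (1 - t^2) * t^2 / F t)
    (U V : ℝ × ℝ → ℝ)
    (hU : ContDiffOn ℝ 1 U D) (hV : ContDiffOn ℝ 1 V D)
    (hUne : ∀ p ∈ D, U p ≠ 0) (hVne : ∀ p ∈ D, V p ≠ 0)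
    (hsys : ∀ p ∈ D,
      pdt U p + lam p.1 * pdr U p =
        -((κ + 1) * U p / (2 * F p.1 * V p)) * ((U p + V p)/p.1)
        + ((κ + 2 - 2*p.1^2)/F p.1) * U p * p.1 ∧
      pdt V p - lam p.1 * pdr V p =
        -((κ + 1) * V p / (2 * F p.1 * U p)) * ((U p + V p)/p.1)
        + ((κ + 2 - 2*p.1^2)/F p.1) * V p * p.1) :
    ∀ p ∈ D,
      pdt (fun q => 1 / U q) p + lam p.1 * pdr (fun q => 1 / U q) p =
        (1 / U p - -(1 / V p)) / (2 * p.1)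
        + ((κ + 2 - p.1^2) * p.1 / (2 * F p.1)) * (1 / U p - -(1 / V p))
        - ((κ + 2 - 2*p.1^2) * p.1 / F p.1) * (1 / U p) ∧
      pdt (fun q => -(1 / V q)) p - lam p.1 * pdr (fun q => -(1 / V q)) p =
        (-(1 / V p) - 1 / U p) / (2 * p.1)
        - ((κ + 2 - p.1^2) * p.1 / (2 * F p.1)) * (1 / U p - -(1 / V p))
        - ((κ + 2 - 2*p.1^2) * p.1 / F p.1) * (-(1 / V p)) :=
  stmt_11_general κ hκ D hD hDsub F lam hF U V hU hV hUne hVne hsys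
end

section
/- Verification identities (4.17)–(4.18). Let κ > 0, t ∈ (0,1), and let r, θ̂₁, Ū, V̄ be real numbers with Ū ≠ 0 and V̄ ≠ 0. Set θ = θ̂₁ − r, ϖ = √(1−t²), ω = arccos t (so cos ω = t, sin ω = ϖ), α = θ + ω, W̄ = (Ū − V̄)/t, and F₁ = t·sin(θ̂₁−r) − ϖ·cos(θ̂₁−r), F₂ = t·sin(θ̂₁−r) + ϖ·cos(θ̂₁−r), F₃ = t·cos(θ̂₁−r) + ϖ·sin(θ̂₁−r), F₄ = t·cos(θ̂₁−r) − ϖ·sin(θ̂₁−r). Define (as in (4.10)) θ_x = (F₁V̄ − F₂Ū)/(ŪV̄), θ_y = (F₄Ū − F₃V̄)/(ŪV̄), ϖ_x = −((κ+1−t²)/(ŪV̄))·( sin(θ̂₁−r)·(Ū+V̄) + ϖ·cos(θ̂₁−r)·W̄ ), ϖ_y = ((κ+1−t²)/(ŪV̄))·( cos(θ̂₁−r)·(Ū+V̄) − ϖ·sin(θ̂₁−r)·W̄ ). Then: cos α·θ_x + sin α·θ_y = −2tϖ/Ū, cos α·ϖ_x + sin α·ϖ_y = 2(κ+ϖ²)ϖ/Ū,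 and consequently (cos α·θ_x + sin α·θ_y) + (cos ω/(κ+ϖ²))·(cos α·ϖ_x + sin α·ϖ_y) = 0, i.e. the first equation of system (2.10) holds identically. -/
/-!
Write `s = sin θ`, `c = cos θ`. Since `cos ω = t` and `sin ω = ϖ`, the characteristic direction
`(cos α, sin α) = (c t - s ϖ, s t + c ϖ)` is `(c, s)` rotated by `ω`. Pairing it with the derivatives
of (4.10), the `Ū`-terms cancel and `s² + c² = 1` leaves a multiple of `V̄ / (Ū V̄)`: for `θ` the
multiple is `-2 t ϖ`, and for `ϖ` it is `2 (κ + ϖ²) ϖ`, using `t W̄ = Ū - V̄`. The first equation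
of (2.10) is then `-2 t ϖ / Ū + t / (κ + ϖ²) · 2 (κ + ϖ²) ϖ / Ū = 0`.
-/

section CharacteristicDerivatives

variable {s c t ϖ U V : ℝ}

theorem theta_derivative_along_characteristic (hsc : s ^ 2 + c ^ 2 = 1) (hV : V ≠ 0) :
    (c * t - s * ϖ) * (((t * s - ϖ * c) * V - (t * s + ϖ * c) * U) / (U * V))
      + (s * t + c * ϖ) * (((t * c - ϖ * s) * U - (t * c + ϖ * s) * V) / (U * V))
      = -(2 * t * ϖ) / U :=
  calc _ = -(2 * t * ϖ) * (s ^ 2 + c ^ 2) * V / (U * V) := by ring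
    _ = -(2 * t * ϖ) / U := by rw [hsc, mul_one, mul_div_mul_right _ _ hV]

theorem varpi_derivative_along_characteristic (K W : ℝ) (hsc : s ^ 2 + c ^ 2 = 1)
    (hV : V ≠ 0) (htW : t * W = U - V) :
    (c * t - s * ϖ) * (-(K / (U * V)) * (s * (U + V) + ϖ * c * W))
      + (s * t + c * ϖ) * (K / (U * V) * (c * (U + V) - ϖ * s * W))
      = 2 * K * ϖ / U :=
  calc _ = K * ϖ * (s ^ 2 + c ^ 2) * (U + V - t * W) / (U * V) := by ring
    _ = 2 * K * ϖ * V / (U * V) := by rw [hsc, htW]; ring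
    _ = 2 * K * ϖ / U := mul_div_mul_right _ _ hV

end CharacteristicDerivatives

theorem stmt_17_general (κ t r θ₁ Ub Vb : ℝ) (hκ : 0 < κ) (ht : t ∈ Set.Ioo (0:ℝ) 1)
    (hVb : Vb ≠ 0)
    (θ ϖ ω α Wb F₁ F₂ F₃ F₄ θx θy ϖx ϖy : ℝ)
    (hθ : θ = θ₁ - r)
    (hϖ : ϖ = Real.sqrt (1 - t^2))
    (hω : ω = Real.arccos t)
    (hα : α = θ + ω)
    (hWb : Wb = (Ub - Vb)/t)
    (hF₁ : F₁ = t * Real.sin (θ₁ - r) - ϖ * Real.cos (θ₁ - r))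
    (hF₂ : F₂ = t * Real.sin (θ₁ - r) + ϖ * Real.cos (θ₁ - r))
    (hF₃ : F₃ = t * Real.cos (θ₁ - r) + ϖ * Real.sin (θ₁ - r))
    (hF₄ : F₄ = t * Real.cos (θ₁ - r) - ϖ * Real.sin (θ₁ - r))
    (hθx : θx = (F₁ * Vb - F₂ * Ub)/(Ub * Vb))
    (hθy : θy = (F₄ * Ub - F₃ * Vb)/(Ub * Vb))
    (hϖx : ϖx = -((κ + 1 - t^2)/(Ub * Vb)) *
      (Real.sin (θ₁ - r) * (Ub + Vb) + ϖ * Real.cos (θ₁ - r) * Wb))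
    (hϖy : ϖy = ((κ + 1 - t^2)/(Ub * Vb)) *
      (Real.cos (θ₁ - r) * (Ub + Vb) - ϖ * Real.sin (θ₁ - r) * Wb)) :
    Real.cos α * θx + Real.sin α * θy = -(2 * t * ϖ)/Ub ∧
    Real.cos α * ϖx + Real.sin α * ϖy = 2 * (κ + ϖ^2) * ϖ / Ub ∧
    (Real.cos α * θx + Real.sin α * θy)
      + (Real.cos ω/(κ + ϖ^2)) * (Real.cos α * ϖx + Real.sin α * ϖy) = 0 := by
  obtain ⟨ht0, ht1⟩ := ht
  have hcosω : Real.cos ω = t := by rw [hω, Real.cos_arccos] <;> linarith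
  have hsinω : Real.sin ω = ϖ := by rw [hω, Real.sin_arccos, hϖ]
  have hK : κ + 1 - t ^ 2 = κ + ϖ ^ 2 := by rw [hϖ, Real.sq_sqrt (by nlinarith)]; ring
  have htW : t * Wb = Ub - Vb := by rw [hWb]; field_simp
  subst hθ hα hF₁ hF₂ hF₃ hF₄ hθx hθy hϖx hϖy
  rw [Real.cos_add, Real.sin_add, hcosω, hsinω]
  have hsc := Real.sin_sq_add_cos_sq (θ₁ - r)
  have hθ' := theta_derivative_along_characteristic (t := t) (ϖ := ϖ) (U := Ub) hsc hVb
  have hϖ' := varpi_derivative_along_characteristic (ϖ := ϖ) (κ + 1 - t ^ 2) Wb hsc hVb htW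
  rw [hK] at hϖ' ⊢
  refine ⟨hθ', hϖ', ?_⟩
  have hden : κ + ϖ ^ 2 ≠ 0 := by positivity
  rw [hθ', hϖ']
  field_simp
  ring

/-- Verification identities (4.17)–(4.18). -/
theorem stmt_17 (κ t r θ₁ Ub Vb : ℝ) (hκ : 0 < κ) (ht : t ∈ Set.Ioo (0:ℝ) 1)
    (hUb : Ub ≠ 0) (hVb : Vb ≠ 0)
    (θ ϖ ω α Wb F₁ F₂ F₃ F₄ θx θy ϖx ϖy : ℝ)
    (hθ : θ = θ₁ - r)
    (hϖ : ϖ = Real.sqrt (1 - t^2))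
    (hω : ω = Real.arccos t)
    (hα : α = θ + ω)
    (hWb : Wb = (Ub - Vb)/t)
    (hF₁ : F₁ = t * Real.sin (θ₁ - r) - ϖ * Real.cos (θ₁ - r))
    (hF₂ : F₂ = t * Real.sin (θ₁ - r) + ϖ * Real.cos (θ₁ - r))
    (hF₃ : F₃ = t * Real.cos (θ₁ - r) + ϖ * Real.sin (θ₁ - r))
    (hF₄ : F₄ = t * Real.cos (θ₁ - r) - ϖ * Real.sin (θ₁ - r))
    (hθx : θx = (F₁ * Vb - F₂ * Ub)/(Ub * Vb))
    (hθy : θy = (F₄ * Ub - F₃ * Vb)/(Ub * Vb))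
    (hϖx : ϖx = -((κ + 1 - t^2)/(Ub * Vb)) *
      (Real.sin (θ₁ - r) * (Ub + Vb) + ϖ * Real.cos (θ₁ - r) * Wb))
    (hϖy : ϖy = ((κ + 1 - t^2)/(Ub * Vb)) *
      (Real.cos (θ₁ - r) * (Ub + Vb) - ϖ * Real.sin (θ₁ - r) * Wb)) :
    Real.cos α * θx + Real.sin α * θy = -(2 * t * ϖ)/Ub ∧
    Real.cos α * ϖx + Real.sin α * ϖy = 2 * (κ + ϖ^2) * ϖ / Ub ∧
    (Real.cos α * θx + Real.sin α * θy)
      + (Real.cos ω/(κ + ϖ^2)) * (Real.cos α * ϖx + Real.sin α * ϖy) = 0 :=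
  stmt_17_general κ t r θ₁ Ub Vb hκ ht hVb θ ϖ ω α Wb F₁ F₂ F₃ F₄ θx θy ϖx ϖy hθ hϖ hω hα hWb hF₁
    hF₂ hF₃ hF₄ hθx hθy hϖx hϖy
end

section
/- Image of positive characteristics is a negative characteristic (slope identity from (4.16)). Let κ > 0, t ∈ (0,1), and let r, θ̂₁, U, V be real numbers with U ≠ 0. Set λ = √(1−t²)·t²/F with F = (1−t²)(κ+1−t²), and define F₁ = t·sin(θ̂₁−r) − √(1−t²)·cos(θ̂₁−r), F₂ = t·sin(θ̂₁−r) + √(1−t²)·cos(θ̂₁−r), F₃ = t·cos(θ̂₁−r) + √(1−t²)·sin(θ̂₁−r), F₄ = t·cos(θ̂₁−r) − √(1−t²)·sin(θ̂₁−r), together with θ_x = F₁U + F₂V, θ_y = −F₃U − F₄V, ω_x = −((κ+1−t²)/t²)·(F₁U − F₂V), ω_y = ((κ+1−t²)/t²)·(F₃U − F₄V). If F₃ ≠ 0, then λ·√(1−t²)·ω_y − θ_y = 2F₃U ≠ 0 and −(λ·√(1−t²)·ω_x − θ_x)/(λ·√(1−t²)·ω_y − θ_y) = F₁/F₃ = tan((θ̂₁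 − r) − arccos t), i.e. the slope dy/dx computed along the curve r(x,y) = r₊(t(x,y)) equals tan(θ − ω) = Λ₋, the negative characteristic slope. -/
/-! The factor `λ √(1 - t²)` equals `t² / (κ + 1 - t²)`, the reciprocal of the coefficient in
`ω_x, ω_y`, so in `λ √(1 - t²) ω - θ` the `V`-terms cancel and the `U`-terms double. The slope is
then `F₁ / F₃`, and writing `t = cos (arccos t)`, `√(1 - t²) = sin (arccos t)` identifies `F₁`, `F₃`
as `sin` and `cos` of `(θ̂₁ - r) - arccos t`. -/

open Real

lemma sin_sub_arccos {t : ℝ} (ht₁ : -1 ≤ t) (ht₂ : t ≤ 1) (a : ℝ) :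
    sin (a - arccos t) = t * sin a - √(1 - t ^ 2) * cos a := by
  rw [sin_sub, cos_arccos ht₁ ht₂, sin_arccos]
  ring

lemma cos_sub_arccos {t : ℝ} (ht₁ : -1 ≤ t) (ht₂ : t ≤ 1) (a : ℝ) :
    cos (a - arccos t) = t * cos a + √(1 - t ^ 2) * sin a := by
  rw [cos_sub, cos_arccos ht₁ ht₂, sin_arccos]
  ring

lemma tan_sub_arccos {t : ℝ} (ht₁ : -1 ≤ t) (ht₂ : t ≤ 1) (a : ℝ) :
    tan (a - arccos t) =
      (t * sin a - √(1 - t ^ 2) * cos a) / (t * cos a + √(1 - t ^ 2) * sin a) := by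
  rw [tan_eq_sin_div_cos, sin_sub_arccos ht₁ ht₂, cos_sub_arccos ht₁ ht₂]

lemma sqrt_one_sub_sq_mul_div_mul {t : ℝ} (ht : t ^ 2 < 1) (c : ℝ) :
    √(1 - t ^ 2) * t ^ 2 / ((1 - t ^ 2) * c) * √(1 - t ^ 2) = t ^ 2 / c := by
  have hpos : 0 < 1 - t ^ 2 := by linarith
  rw [div_mul_eq_mul_div, mul_right_comm, mul_self_sqrt hpos.le, mul_div_mul_left _ _ hpos.ne']

theorem stmt_18_general (κ t r θ₁ U V : ℝ) (hκ : 0 < κ) (ht : t ∈ Set.Ioo (0:ℝ) 1)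
    (hU : U ≠ 0)
    (F lam F₁ F₂ F₃ F₄ θx θy ωx ωy : ℝ)
    (hF : F = (1 - t^2) * (κ + 1 - t^2))
    (hlam : lam = Real.sqrt (1 - t^2) * t^2 / F)
    (hF₁ : F₁ = t * Real.sin (θ₁ - r) - Real.sqrt (1 - t^2) * Real.cos (θ₁ - r))
    (hF₃ : F₃ = t * Real.cos (θ₁ - r) + Real.sqrt (1 - t^2) * Real.sin (θ₁ - r))
    (hθx : θx = F₁ * U + F₂ * V)
    (hθy : θy = -(F₃ * U) - F₄ * V)
    (hωx : ωx = -((κ + 1 - t^2)/t^2) * (F₁ * U - F₂ * V))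
    (hωy : ωy = ((κ + 1 - t^2)/t^2) * (F₃ * U - F₄ * V))
    (hF₃ne : F₃ ≠ 0) :
    lam * Real.sqrt (1 - t^2) * ωy - θy = 2 * F₃ * U ∧
    2 * F₃ * U ≠ 0 ∧
    -((lam * Real.sqrt (1 - t^2) * ωx - θx)/(lam * Real.sqrt (1 - t^2) * ωy - θy))
      = F₁ / F₃ ∧
    F₁ / F₃ = Real.tan ((θ₁ - r) - Real.arccos t) := by
  obtain ⟨ht₀, ht₁⟩ := ht
  have ht_sq : t ^ 2 < 1 := by nlinarith
  have hscale : lam * √(1 - t ^ 2) * ((κ + 1 - t ^ 2) / t ^ 2) = 1 := by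
    have : κ + 1 - t ^ 2 ≠ 0 := by linarith
    rw [hlam, hF, sqrt_one_sub_sq_mul_div_mul ht_sq]
    field_simp
  have hy : lam * √(1 - t ^ 2) * ωy - θy = 2 * F₃ * U := by
    rw [hωy, hθy, ← mul_assoc, hscale]
    ring
  have hx : lam * √(1 - t ^ 2) * ωx - θx = -(2 * F₁ * U) := by
    rw [hωx, hθx]
    linear_combination (F₂ * V - F₁ * U) * hscale
  have hne : 2 * F₃ * U ≠ 0 := mul_ne_zero (mul_ne_zero two_ne_zero hF₃ne) hU
  refine ⟨hy, hne, ?_, ?_⟩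
  · rw [hy, hx, neg_div, neg_neg, mul_div_mul_right _ _ hU, mul_div_mul_left _ _ two_ne_zero]
  · rw [tan_sub_arccos (by linarith) ht₁.le, hF₁, hF₃]

/-- Image of positive characteristics is a negative characteristic
(slope identity from (4.16)). -/
theorem stmt_18 (κ t r θ₁ U V : ℝ) (hκ : 0 < κ) (ht : t ∈ Set.Ioo (0:ℝ) 1)
    (hU : U ≠ 0)
    (F lam F₁ F₂ F₃ F₄ θx θy ωx ωy : ℝ)
    (hF : F = (1 - t^2) * (κ + 1 - t^2))
    (hlam : lam = Real.sqrt (1 - t^2) * t^2 / F)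
    (hF₁ : F₁ = t * Real.sin (θ₁ - r) - Real.sqrt (1 - t^2) * Real.cos (θ₁ - r))
    (hF₂ : F₂ = t * Real.sin (θ₁ - r) + Real.sqrt (1 - t^2) * Real.cos (θ₁ - r))
    (hF₃ : F₃ = t * Real.cos (θ₁ - r) + Real.sqrt (1 - t^2) * Real.sin (θ₁ - r))
    (hF₄ : F₄ = t * Real.cos (θ₁ - r) - Real.sqrt (1 - t^2) * Real.sin (θ₁ - r))
    (hθx : θx = F₁ * U + F₂ * V)
    (hθy : θy = -(F₃ * U) - F₄ * V)
    (hωx : ωx = -((κ + 1 - t^2)/t^2) * (F₁ * U - F₂ * V))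
    (hωy : ωy = ((κ + 1 - t^2)/t^2) * (F₃ * U - F₄ * V))
    (hF₃ne : F₃ ≠ 0) :
    lam * Real.sqrt (1 - t^2) * ωy - θy = 2 * F₃ * U ∧
    2 * F₃ * U ≠ 0 ∧
    -((lam * Real.sqrt (1 - t^2) * ωx - θx)/(lam * Real.sqrt (1 - t^2) * ωy - θy))
      = F₁ / F₃ ∧
    F₁ / F₃ = Real.tan ((θ₁ - r) - Real.arccos t) :=
  stmt_18_general κ t r θ₁ U V hκ ht hU F lam F₁ F₂ F₃ F₄ θx θy ωx ωy hF hlam hF₁ hF₃ hθx hθy hωx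
    hωy hF₃ne
end
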